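/- Let $M$ and $N$ be groups with $N$ normal in $G = M \ltimes N$. Fix $m \in M$ and suppose the map $N \to N$, $n \mapsto m^{-1} n^{-1} m n$, is bijective. Then the conjugation map $c: M \times N \to G$, $(m', n) \mapsto n m' n^{-1}$, restricted to $\{m\} \times N$, is injective with image the set of $N$-conjugates of $m$; more generally, if for every $m$ in an $M$-conjugation-stable subset $M_{\mathrm{reg}} \subseteq M$ the commutator map $n \mapsto m^{-1}n^{-1}mn$ is bijective, then every element of $M_{\mathrm{reg}} N$ is $N$-conjugate to a unique element of $M_{\mathrm{reg}}$. -/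
import Mathlib


/-!
STATEMENT 13: Let `G = M ⋉ N`.  If for every `m` in an `M`-conjugation-stable
subset `M_reg ⊆ M` the commutator map `n ↦ m⁻¹n⁻¹mn` is bijective on `N`, then:
(a) for each `m ∈ M_reg` the conjugation map `n ↦ n m n⁻¹` is injective on `N`
(so it is a bijection of `N` onto the set of `N`-conjugates of `m`); and
(b) every element of `M_reg N` is `N`-conjugate to a unique element of `M_reg`.

We formalize with `M, N` subgroups of a group `G`, `N` normal, `M ⊓ N = ⊥`
(internal semidirect product).
-/

theorem stmt13 {G : Type*} [Group G] (M N : Subgroup G) (hN : N.Normal)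
    (hdisj : M ⊓ N = ⊥) (Mreg : Set G) (hMsub : Mreg ⊆ (M : Set G))
    (hstab : ∀ m ∈ Mreg, ∀ m' ∈ M, m' * m * m'⁻¹ ∈ Mreg)
    (hbij : ∀ m ∈ Mreg,
      Function.Bijective (fun n : N =>
        (⟨m⁻¹ * (↑n)⁻¹ * m * ↑n, by
          have h1 := hN.conj_mem _ (N.inv_mem n.2) m⁻¹
          have h2 := mul_mem h1 n.2
          simpa [mul_assoc] using h2⟩ : N))) :
    (∀ m ∈ Mreg, ∀ n₁ n₂ : N,
        (↑n₁ : G) * m * (↑n₁)⁻¹ = (↑n₂ : G) * m * (↑n₂)⁻¹ → n₁ = n₂) ∧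
    (∀ g : G, (∃ m ∈ Mreg, ∃ n ∈ N, g = m * n) →
        ∃! m' : G, m' ∈ Mreg ∧ ∃ n : N, g = ↑n * m' * (↑n)⁻¹) := by
  have key : ∀ m₁ ∈ M, ∀ m₂ ∈ M, m₁⁻¹ * m₂ ∈ N → m₁ = m₂ := by
    intro m₁ h₁ m₂ h₂ hn
    have : m₁⁻¹ * m₂ ∈ M ⊓ N := ⟨M.mul_mem (M.inv_mem h₁) h₂, hn⟩
    rw [hdisj, Subgroup.mem_bot] at this
    exact inv_mul_eq_one.mp this
  constructor
  · intro m hm n₁ n₂ h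
    have hinj := (hbij m hm).1
    have heq := hinj (a₁ := n₂⁻¹ * n₁) (a₂ := 1) (by
      apply Subtype.ext
      push_cast
      simp only [mul_inv_rev, inv_inv, mul_one, inv_one]
      rw [show m⁻¹ * ((↑n₁)⁻¹ * ↑n₂) * m * ((↑n₂)⁻¹ * ↑n₁)
          = m⁻¹ * ((↑n₁)⁻¹ * (↑n₂ * m * (↑n₂)⁻¹) * ↑n₁) by group, ← h]
      group)
    exact (inv_mul_eq_one.mp heq).symm
  · intro g hg
    obtain ⟨m, hm, n, hn, rfl⟩ := hg
    -- existence: find n₀ with n₀ m n₀⁻¹ = m n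
    obtain ⟨x, hx⟩ := (hbij m hm).2 ⟨n, hn⟩
    have hx' : m⁻¹ * (↑x)⁻¹ * m * ↑x = n := congrArg Subtype.val hx
    refine ⟨m, ⟨hm, ⟨x⁻¹, ?_⟩⟩, ?_⟩
    · push_cast
      rw [← hx']; group
    · rintro m' ⟨hm', n', hn'⟩
      -- m * n = n' * m' * n'⁻¹, so m'⁻¹ * (n'⁻¹ m n') ∈ ...
      have hmM := hMsub hm
      have hm'M := hMsub hm'
      -- m' = n'⁻¹ * m * n * n'
      have h1 : m' = (↑n')⁻¹ * (m * n) * ↑n' := by rw [hn']; group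
      have h2 : m⁻¹ * m' ∈ N := by
        rw [h1]
        have : m⁻¹ * ((↑n')⁻¹ * (m * ↑n) * ↑n')
            = (m⁻¹ * (↑n')⁻¹ * m) * (↑n * ↑n') := by group
        rw [this]
        exact mul_mem (by simpa [mul_assoc] using hN.conj_mem _ (inv_mem n'.2) m⁻¹)
          (mul_mem hn n'.2)
      exact (key m hmM m' hm'M h2).symm
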